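/- arXiv:1601.03425 — 2 statements merged into one kernel-verified Lean document; each statement's English description precedes it below -/
import Mathlib

section
/- Let n ≥ 2 and x, y ∈ ℂⁿ, and set T = x x* − y y*. Then the multiset of eigenvalues of the Hermitian matrix T consists of a₊ = (‖x‖² − ‖y‖² + √((‖x‖²+‖y‖²)² − 4|⟨x,y⟩|²))/2, a₋ = (‖x‖² − ‖y‖² − √((‖x‖²+‖y‖²)² − 4|⟨x,y⟩|²))/2, and 0 with multiplicity n−2. Consequently the sum of the absolute values of the eigenvalues of T equals √((‖x‖²+‖y‖²)² − 4|⟨x,y⟩|²), and the sum of the squares of the eigenvalues of T (i.e., trace(T²)) equals ‖x‖⁴ + ‖y‖⁴ − 2|⟨x,y⟩|². -/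
/-!
Write `T = x x* - y y* = U V` with `U = [x, -y] ∈ ℂ^(n×2)` and `V = [x*; y*]`. Since `UV` and
`VU` share their nonzero spectrum, `χ_T = X^(n-2) χ_{VU}`, and the `2 × 2` matrix `VU` has trace
`‖x‖² - ‖y‖²` and determinant `|⟨x,y⟩|² - ‖x‖²‖y‖² ≤ 0` (Cauchy–Schwarz). Hence `χ_{VU}` has real
roots `a₊ ≥ 0 ≥ a₋`, the eigenvalues of `T` are the roots of `χ_T`, and the two sums are
`a₊ - a₋` and `a₊² + a₋²`.
-/

open Matrix Finset

/-- Standard inner product on `ℂⁿ`, linear in the first argument. -/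
noncomputable def cip {n : ℕ} (x y : Fin n → ℂ) : ℂ := ∑ i, x i * starRingEnd ℂ (y i)

/-- Squared Euclidean norm on `ℂⁿ`. -/
noncomputable def cnormSq {n : ℕ} (x : Fin n → ℂ) : ℝ := ∑ i, Complex.normSq (x i)

open Polynomial

theorem Polynomial.X_sub_C_mul_X_sub_C {R : Type*} [CommRing R] (a b : R) :
    (X - C a) * (X - C b) = X ^ 2 - C (a + b) * X + C (a * b) := by
  simp only [C_add, C_mul]
  ring

theorem Polynomial.roots_X_pow_mul_X_sub_C_mul_X_sub_C {R : Type*} [CommRing R] [IsDomain R]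
    (k : ℕ) (a b : R) :
    (X ^ k * ((X - C a) * (X - C b))).roots = a ::ₘ b ::ₘ Multiset.replicate k 0 := by
  rw [roots_mul (mul_ne_zero (pow_ne_zero _ X_ne_zero) (mul_ne_zero (X_sub_C_ne_zero a)
    (X_sub_C_ne_zero b))), roots_mul (mul_ne_zero (X_sub_C_ne_zero a) (X_sub_C_ne_zero b)),
    roots_X_pow, roots_X_sub_C, roots_X_sub_C, Multiset.nsmul_singleton, add_comm, add_assoc,
    Multiset.singleton_add, Multiset.singleton_add]

theorem Matrix.vecMulVec_add_vecMulVec_eq_mul {R n : Type*} [CommRing R]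
    (u₁ u₂ v₁ v₂ : n → R) :
    vecMulVec u₁ v₁ + vecMulVec u₂ v₂ = (of ![u₁, u₂])ᵀ * of ![v₁, v₂] := by
  ext i j
  simp [mul_apply, Fin.sum_univ_two, vecMulVec_apply]

theorem Matrix.charpoly_vecMulVec_add_vecMulVec {R n : Type*} [CommRing R] [Nontrivial R]
    [Fintype n] [DecidableEq n] (u₁ u₂ v₁ v₂ : n → R) (hn : 2 ≤ Fintype.card n) :
    (vecMulVec u₁ v₁ + vecMulVec u₂ v₂).charpoly =
      X ^ (Fintype.card n - 2) * (X ^ 2 - C (v₁ ⬝ᵥ u₁ + v₂ ⬝ᵥ u₂) * X +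
        C (v₁ ⬝ᵥ u₁ * (v₂ ⬝ᵥ u₂) - v₁ ⬝ᵥ u₂ * (v₂ ⬝ᵥ u₁))) := by
  rw [vecMulVec_add_vecMulVec_eq_mul, charpoly_mul_comm_of_le _ _ (by simpa using hn),
    Fintype.card_fin, charpoly_fin_two, trace_fin_two, det_fin_two]
  simp [mul_apply, dotProduct, mul_comm]

theorem Matrix.IsHermitian.eigenvalues_eq_of_roots_charpoly {𝕜 n : Type*} [RCLike 𝕜]
    [Fintype n] [DecidableEq n] {A : Matrix n n 𝕜} (hA : A.IsHermitian) {s : Multiset ℝ}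
    (h : A.charpoly.roots = s.map (↑)) :
    univ.val.map hA.eigenvalues = s := by
  apply Multiset.map_injective (RCLike.ofReal_injective (K := 𝕜))
  rw [← h, hA.roots_charpoly_eq_eigenvalues, Multiset.map_map]

theorem sum_comp_eq_add_of_univ_map_eq {ι α M : Type*} [Fintype ι] [Zero α] [AddCommMonoid M]
    {g : ι → α} {a b : α} {k : ℕ} (h : univ.val.map g = a ::ₘ b ::ₘ Multiset.replicate k 0)
    (f : α → M) (hf : f 0 = 0) :
    ∑ i, f (g i) = f a + f b := by
  calc ∑ i, f (g i) = ((univ.val.map g).map f).sum := by simp [Multiset.map_map, sum_map_val]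
    _ = f a + f b := by simp [h, hf]

theorem star_dotProduct_eq_cip {n : ℕ} (x y : Fin n → ℂ) : star y ⬝ᵥ x = cip x y := by
  simp [dotProduct, cip, mul_comm]

theorem star_dotProduct_self_eq_cnormSq {n : ℕ} (x : Fin n → ℂ) :
    star x ⬝ᵥ x = cnormSq x := by
  simp [star_dotProduct_eq_cip, cip, cnormSq, Complex.mul_conj]

theorem cip_mul_cip_swap {n : ℕ} (x y : Fin n → ℂ) :
    cip y x * cip x y = (‖cip x y‖ : ℂ) ^ 2 := by
  rw [show cip y x = starRingEnd ℂ (cip x y) by simp [cip, mul_comm], Complex.conj_mul']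

theorem cip_eq_inner {n : ℕ} (x y : Fin n → ℂ) :
    cip x y = inner ℂ (WithLp.toLp 2 y) (WithLp.toLp 2 x) := by
  rw [EuclideanSpace.inner_eq_star_dotProduct, dotProduct_comm, star_dotProduct_eq_cip]

theorem cnormSq_eq_norm_sq {n : ℕ} (x : Fin n → ℂ) :
    cnormSq x = ‖WithLp.toLp 2 x‖ ^ 2 := by
  simp [EuclideanSpace.norm_sq_eq, cnormSq, Complex.normSq_eq_norm_sq]

theorem norm_cip_sq_le {n : ℕ} (x y : Fin n → ℂ) :
    ‖cip x y‖ ^ 2 ≤ cnormSq x * cnormSq y := by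
  rw [cip_eq_inner, cnormSq_eq_norm_sq, cnormSq_eq_norm_sq, ← mul_pow, mul_comm]
  exact pow_le_pow_left₀ (norm_nonneg _) (norm_inner_le_norm _ _) 2

theorem charpoly_vecMulVec_sub_vecMulVec {n : ℕ} (hn : 2 ≤ n) (x y : Fin n → ℂ) :
    (vecMulVec x (star x) - vecMulVec y (star y)).charpoly =
      X ^ (n - 2) * (X ^ 2 - C ((cnormSq x - cnormSq y : ℝ) : ℂ) * X +
        C ((‖cip x y‖ ^ 2 - cnormSq x * cnormSq y : ℝ) : ℂ)) := by
  have htrace : star x ⬝ᵥ x + star y ⬝ᵥ -y = ((cnormSq x - cnormSq y : ℝ) : ℂ) := by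
    simp [star_dotProduct_self_eq_cnormSq, sub_eq_add_neg]
  have hdet : star x ⬝ᵥ x * (star y ⬝ᵥ -y) - star x ⬝ᵥ -y * (star y ⬝ᵥ x) =
      ((‖cip x y‖ ^ 2 - cnormSq x * cnormSq y : ℝ) : ℂ) := by
    simp only [dotProduct_neg, star_dotProduct_self_eq_cnormSq, star_dotProduct_eq_cip]
    push_cast
    rw [← cip_mul_cip_swap]
    ring
  rw [sub_eq_add_neg, ← neg_vecMulVec, charpoly_vecMulVec_add_vecMulVec _ _ _ _ (by simpa),
    Fintype.card_fin, htrace, hdet]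

theorem eigenvalues_diff_rankOne (n : ℕ) (hn : 2 ≤ n) (x y : Fin n → ℂ)
    (hT : (Matrix.vecMulVec x (star x) - Matrix.vecMulVec y (star y)).IsHermitian) :
    (Finset.univ.val.map hT.eigenvalues) =
      ((cnormSq x - cnormSq y +
        Real.sqrt ((cnormSq x + cnormSq y) ^ 2 - 4 * ‖cip x y‖ ^ 2)) / 2) ::ₘ
      ((cnormSq x - cnormSq y -
        Real.sqrt ((cnormSq x + cnormSq y) ^ 2 - 4 * ‖cip x y‖ ^ 2)) / 2) ::ₘ
      Multiset.replicate (n - 2) (0 : ℝ) ∧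
    (∑ i, |hT.eigenvalues i|) =
      Real.sqrt ((cnormSq x + cnormSq y) ^ 2 - 4 * ‖cip x y‖ ^ 2) ∧
    (∑ i, hT.eigenvalues i ^ 2) =
      cnormSq x ^ 2 + cnormSq y ^ 2 - 2 * ‖cip x y‖ ^ 2 := by
  set α := cnormSq x
  set β := cnormSq y
  set Q := ‖cip x y‖ ^ 2
  set e := Real.sqrt ((α + β) ^ 2 - 4 * Q)
  have hCS : Q ≤ α * β := norm_cip_sq_le x y
  have he : e ^ 2 = (α + β) ^ 2 - 4 * Q :=
    Real.sq_sqrt (by nlinarith [sq_nonneg (α - β)])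
  have hspec : univ.val.map hT.eigenvalues =
      (α - β + e) / 2 ::ₘ (α - β - e) / 2 ::ₘ Multiset.replicate (n - 2) 0 := by
    apply hT.eigenvalues_eq_of_roots_charpoly
    have hsum : (α - β + e) / 2 + (α - β - e) / 2 = α - β := by ring
    have hprod : (α - β + e) / 2 * ((α - β - e) / 2) = Q - α * β := by
      linear_combination (-1 / 4 : ℝ) * he
    have hfactor : X ^ 2 - C ((α - β : ℝ) : ℂ) * X + C ((Q - α * β : ℝ) : ℂ) =
        (X - C (((α - β + e) / 2 : ℝ) : ℂ)) * (X - C (((α - β - e) / 2 : ℝ) : ℂ)) := by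
      rw [X_sub_C_mul_X_sub_C, ← Complex.ofReal_add, ← Complex.ofReal_mul, hsum, hprod]
    rw [charpoly_vecMulVec_sub_vecMulVec hn, hfactor, roots_X_pow_mul_X_sub_C_mul_X_sub_C]
    simp
  refine ⟨hspec, ?_, ?_⟩
  · have hαβ : |α - β| ≤ e := Real.abs_le_sqrt (by nlinarith)
    obtain ⟨hlo, hhi⟩ := abs_le.mp hαβ
    rw [sum_comp_eq_add_of_univ_map_eq hspec abs abs_zero, abs_of_nonneg (by linarith),
      abs_of_nonpos (by linarith)]
    ring
  · rw [sum_comp_eq_add_of_univ_map_eq hspec (· ^ 2) (zero_pow two_ne_zero)]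
    linear_combination (1 / 2 : ℝ) * he
end

section
/- Let f₁, …, f_m ∈ ℝⁿ with m = 2n − 1. Then the family is phase retrievable for ℝⁿ (i.e., for all x, y ∈ ℝⁿ, |⟨x,f_k⟩| = |⟨y,f_k⟩| for all k implies x = y or x = −y) if and only if the family is full spark, i.e., every subset of n of the vectors f₁,…,f_m is linearly independent. -/
/-!
A family `f` fails to be phase retrievable exactly when some index set `S` and its complement
both fail to span: then vectors `u ⟂ f S` and `v ⟂ f Sᶜ` give `|⟨u + v, f k⟩| = |⟨u - v, f k⟩|`
for all `k`; conversely, if `|⟨x, f k⟩| = |⟨y, f k⟩|` for all `k`, then `x - y` is orthogonal to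
`f k` for the `k` in `S = {k | ⟨x, f k⟩ = ⟨y, f k⟩}` and `x + y` is orthogonal to the remaining
ones. With `2n - 1` vectors, one of `S`, `Sᶜ` has at least `n` elements and the other at most
`n - 1`, so this complement property is equivalent to every `n` of the vectors spanning, i.e. to
full spark.
-/

open Finset

/-- Standard inner product on `ℝⁿ`. -/
noncomputable def rip {n : ℕ} (x y : Fin n → ℝ) : ℝ := ∑ i, x i * y i

open Submodule

variable {K : Type*} [Field K]

theorem span_eq_top_iff_forall_dotProduct_eq_zero {d : Type*} [Fintype d] {s : Set (d → K)} :
    span K s = ⊤ ↔ ∀ z : d → K, (∀ v ∈ s, z ⬝ᵥ v = 0) → z = 0 := by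
  classical
  rw [← dualAnnihilator_eq_bot_iff, eq_bot_iff, SetLike.le_def,
    ← (dotProductEquiv K d).forall_congr_right]
  simp only [← SetLike.mem_coe, coe_dualAnnihilator_span]
  simp [Set.subset_def]

variable {ι : Type*} {n : ℕ}

def IsPhaseRetrievable [LinearOrder K] (f : ι → Fin n → K) : Prop :=
  ∀ x y : Fin n → K, (∀ k, |x ⬝ᵥ f k| = |y ⬝ᵥ f k|) → x = y ∨ x = -y

def HasComplementProperty (f : ι → Fin n → K) : Prop :=
  ∀ s : Set ι, span K (f '' s) = ⊤ ∨ span K (f '' sᶜ) = ⊤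

def IsFullSpark (f : ι → Fin n → K) : Prop :=
  ∀ s : Finset ι, #s = n → LinearIndependent K (fun k : s => f k)

theorem isPhaseRetrievable_iff_hasComplementProperty [LinearOrder K] [IsStrictOrderedRing K]
    (f : ι → Fin n → K) : IsPhaseRetrievable f ↔ HasComplementProperty f := by
  constructor
  · intro hf s
    by_contra! hspan
    obtain ⟨u, hu, hu0⟩ : ∃ u, (∀ k ∈ s, u ⬝ᵥ f k = 0) ∧ u ≠ 0 := by
      simpa using mt span_eq_top_iff_forall_dotProduct_eq_zero.2 hspan.1
    obtain ⟨v, hv, hv0⟩ : ∃ v, (∀ k ∉ s, v ⬝ᵥ f k = 0) ∧ v ≠ 0 := by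
      simpa using mt span_eq_top_iff_forall_dotProduct_eq_zero.2 hspan.2
    have habs : ∀ k, |(u + v) ⬝ᵥ f k| = |(u - v) ⬝ᵥ f k| := by
      intro k
      by_cases hk : k ∈ s
      · simp [add_dotProduct, sub_dotProduct, hu k hk]
      · simp [add_dotProduct, sub_dotProduct, hv k hk]
    rcases hf _ _ habs with h | h
    · exact hv0 (self_eq_neg.1 (by linear_combination h))
    · exact hu0 (self_eq_neg.1 (by linear_combination h))
  · intro hf x y hxy
    set S := {k | x ⬝ᵥ f k = y ⬝ᵥ f k}
    rcases hf S with hS | hS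
    · left
      refine sub_eq_zero.1 (span_eq_top_iff_forall_dotProduct_eq_zero.1 hS _ ?_)
      rintro _ ⟨k, hk, rfl⟩
      rw [sub_dotProduct, hk, sub_self]
    · right
      refine eq_neg_of_add_eq_zero_left (span_eq_top_iff_forall_dotProduct_eq_zero.1 hS _ ?_)
      rintro _ ⟨k, hk, rfl⟩
      rw [add_dotProduct, (abs_eq_abs.1 (hxy k)).resolve_left hk, neg_add_cancel]

theorem span_image_ne_top_of_card_lt {E : Type*} [AddCommGroup E] [Module K E]
    [FiniteDimensional K E] (f : ι → E) {s : Finset ι} (hs : #s < Module.finrank K E) :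
    span K (f '' s) ≠ ⊤ := by
  classical
  intro htop
  have := finrank_span_finset_le_card (R := K) (s.image f)
  rw [coe_image, Set.finrank, htop, finrank_top] at this
  exact (this.trans card_image_le).not_gt hs

theorem IsFullSpark.span_image_eq_top {f : ι → Fin n → K} (hf : IsFullSpark f) {s : Finset ι}
    (hs : n ≤ #s) : span K (f '' s) = ⊤ := by
  obtain ⟨t, hts, rfl⟩ := exists_subset_card_eq hs
  have := (hf t rfl).span_eq_top_of_card_eq_finrank' (by simp)
  rw [← top_le_iff, ← this]
  exact span_mono (by rintro _ ⟨k, rfl⟩; exact Set.mem_image_of_mem f (hts k.2))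

theorem hasComplementProperty_iff_isFullSpark [Fintype ι] (f : ι → Fin n → K)
    (hcard : Fintype.card ι = 2 * n - 1) : HasComplementProperty f ↔ IsFullSpark f := by
  classical
  constructor
  · intro hf s hs
    have hspan : span K (f '' s) = ⊤ := by
      obtain rfl | hn := Nat.eq_zero_or_pos n
      · exact Subsingleton.elim _ _
      have hsc : #sᶜ < Module.finrank K (Fin n → K) := by
        rw [card_compl, Module.finrank_fin_fun]
        omega
      exact (hf s).resolve_right (by simpa using span_image_ne_top_of_card_lt f hsc)
    exact linearIndependent_of_top_le_span_of_card_eq_finrank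
      (by rw [top_le_iff, ← hspan]; congr 1; ext; simp) (by simp [hs])
  · intro hf s
    have : n ≤ #s.toFinset ∨ n ≤ #sᶜ.toFinset := by
      rw [Set.toFinset_compl, card_compl]
      omega
    refine this.imp (fun h => ?_) (fun h => ?_) <;> simpa using hf.span_image_eq_top h

theorem real_phase_retrieval_iff_full_spark {n m : ℕ} (f : Fin m → (Fin n → ℝ))
    (hm : m = 2 * n - 1) :
    (∀ x y : Fin n → ℝ,
      (∀ k, |rip x (f k)| = |rip y (f k)|) → x = y ∨ x = -y) ↔
    (∀ s : Finset (Fin m), s.card = n →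
      LinearIndependent ℝ (fun k : s => f k)) :=
  -- `rip x y` unfolds to `x ⬝ᵥ y`, so the left side is `IsPhaseRetrievable f` up to defeq.
  (isPhaseRetrievable_iff_hasComplementProperty f).trans
    (hasComplementProperty_iff_isFullSpark f (by simp [hm]))
end
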